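/- Let Z be a complete separable metric space with its Borel σ-algebra and let β, γ, ε > 0 with εβ/γ < 1, and α ∈ [0,1]. Suppose A is a map from probability measures on Z to ℝ^d that is (β/γ)-Lipschitz in coupling form: for all probability measures μ, ν on Z and every coupling π of μ and ν, ‖A(μ) − A(ν)‖ ≤ (β/γ) ∫ dist(z, z') dπ(z, z'). Let D : ℝ^d → P(Z) be ε-sensitive in coupling form and let D_h be a fixed probability measure on Z. Define the heterogeneous-population retraining map T(θ) := A(α D_h + (1−α) D(θ)). Then T is ρ-Lipschitz with ρ := (1−α) εβ/γ < 1; consequently T has a unique fixed point θ*_α, and the iterates θ_{t+1} := T(θ_t) satisfy ‖θ_t − θ*_α‖ ≤ ((1−α) εβ/γ)^t ‖θ_0 − θ*_α‖ for all t. -/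

import Mathlib

/-!
Couple the common part `α • Dh` of the two mixed populations with itself along the diagonal, at
zero cost, and the selfish parts by the coupling witnessing `ε`-sensitivity of `D`: the mixture
map `θ ↦ α • Dh + (1 - α) • D θ` is then `(1 - α) ε`-sensitive. Composed with the
`β / γ`-Lipschitz risk minimizer, retraining becomes a `(1 - α) ε β / γ`-contraction of a complete
space, and Banach's fixed point theorem gives the unique fixed point and the geometric rate.
-/

open MeasureTheory
open scoped NNReal ENNReal

/-- A coupling of two probability measures `μ` and `ν` on `Z` is a measure on `Z × Z`
whose first marginal is `μ` and whose second marginal is `ν`. -/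
def IsCoupling {Z : Type*} [MeasurableSpace Z] (π : Measure (Z × Z)) (μ ν : Measure Z) : Prop :=
  π.map Prod.fst = μ ∧ π.map Prod.snd = ν

section Coupling

variable {Z : Type*} [MeasurableSpace Z]

theorem isCoupling_map_diag (μ : Measure Z) : IsCoupling (μ.map Function.diag) μ μ :=
  ⟨by rw [Measure.map_map measurable_fst measurable_diag]; exact Measure.map_id,
    by rw [Measure.map_map measurable_snd measurable_diag]; exact Measure.map_id⟩

theorem IsCoupling.add {π π' : Measure (Z × Z)} {μ ν μ' ν' : Measure Z}
    (h : IsCoupling π μ ν) (h' : IsCoupling π' μ' ν') : IsCoupling (π + π') (μ + μ') (ν + ν') :=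
  ⟨by rw [Measure.map_add _ _ measurable_fst, h.1, h'.1],
    by rw [Measure.map_add _ _ measurable_snd, h.2, h'.2]⟩

theorem IsCoupling.smul {π : Measure (Z × Z)} {μ ν : Measure Z} (h : IsCoupling π μ ν)
    (c : ℝ≥0) : IsCoupling (c • π) (c • μ) (c • ν) :=
  ⟨by rw [Measure.map_smul, h.1], by rw [Measure.map_smul, h.2]⟩

theorem isProbabilityMeasure_smul_add_smul {μ ν : Measure Z} [IsProbabilityMeasure μ]
    [IsProbabilityMeasure ν] {a b : ℝ≥0} (hab : a + b = 1) :
    IsProbabilityMeasure (a • μ + b • ν) :=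
  ⟨by simp [← ENNReal.coe_add, hab]⟩

end Coupling

theorem integral_add_measure_le_of_nonneg {Ω : Type*} [MeasurableSpace Ω] {μ ν : Measure Ω}
    {f : Ω → ℝ} (hf : 0 ≤ f) : ∫ x, f x ∂(μ + ν) ≤ ∫ x, f x ∂μ + ∫ x, f x ∂ν := by
  by_cases hint : Integrable f (μ + ν)
  · exact (integral_add_measure hint.left_of_add_measure hint.right_of_add_measure).le
  · rw [integral_undef hint]
    exact add_nonneg (integral_nonneg hf) (integral_nonneg hf)

section Sensitivity

variable {Z : Type*} [PseudoMetricSpace Z] [MeasurableSpace Z]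

theorem integral_dist_map_diag (μ : Measure Z) :
    ∫ p, dist p.1 p.2 ∂(μ.map Function.diag) = 0 := by
  by_cases hint : Integrable (fun p : Z × Z => dist p.1 p.2) (μ.map Function.diag)
  · rw [integral_map measurable_diag.aemeasurable hint.1]
    simp [Function.diag]
  · exact integral_undef hint

variable {Θ E : Type*} [PseudoMetricSpace Θ] [PseudoMetricSpace E]

def IsSensitive (ε : ℝ) (D : Θ → Measure Z) : Prop :=
  ∀ θ θ', ∃ π : Measure (Z × Z), IsCoupling π (D θ) (D θ') ∧
    ∫ p, dist p.1 p.2 ∂π ≤ ε * dist θ θ'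

def CouplingLipschitzWith (L : ℝ) (A : Measure Z → E) : Prop :=
  ∀ μ ν : Measure Z, IsProbabilityMeasure μ → IsProbabilityMeasure ν →
    ∀ π : Measure (Z × Z), IsCoupling π μ ν → dist (A μ) (A ν) ≤ L * ∫ p, dist p.1 p.2 ∂π

theorem IsSensitive.const_smul_add_smul {ε : ℝ} {D : Θ → Measure Z} (hD : IsSensitive ε D)
    (a b : ℝ≥0) (μ₀ : Measure Z) : IsSensitive (b * ε) fun θ => a • μ₀ + b • D θ := by
  intro θ θ'
  obtain ⟨π, hπ, hπε⟩ := hD θ θ'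
  refine ⟨a • μ₀.map Function.diag + b • π,
    ((isCoupling_map_diag μ₀).smul a).add (hπ.smul b), ?_⟩
  calc ∫ p, dist p.1 p.2 ∂(a • μ₀.map Function.diag + b • π)
      ≤ ∫ p, dist p.1 p.2 ∂(a • μ₀.map Function.diag) + ∫ p, dist p.1 p.2 ∂(b • π) :=
        integral_add_measure_le_of_nonneg fun _ => dist_nonneg
    _ = b * ∫ p, dist p.1 p.2 ∂π := by
        simp only [integral_smul_nnreal_measure, integral_dist_map_diag, smul_zero, zero_add,
          NNReal.smul_def, smul_eq_mul]
    _ ≤ b * ε * dist θ θ' := by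
        rw [mul_assoc]; exact mul_le_mul_of_nonneg_left hπε b.coe_nonneg

theorem CouplingLipschitzWith.dist_comp_le {L ε : ℝ} {A : Measure Z → E} {D : Θ → Measure Z}
    (hA : CouplingLipschitzWith L A) (hL : 0 ≤ L) (hD : IsSensitive ε D)
    (hprob : ∀ θ, IsProbabilityMeasure (D θ)) (θ θ' : Θ) :
    dist (A (D θ)) (A (D θ')) ≤ L * ε * dist θ θ' := by
  obtain ⟨π, hπ, hπε⟩ := hD θ θ'
  calc dist (A (D θ)) (A (D θ')) ≤ L * ∫ p, dist p.1 p.2 ∂π := hA _ _ (hprob θ) (hprob θ') π hπ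
    _ ≤ L * ε * dist θ θ' := by rw [mul_assoc]; exact mul_le_mul_of_nonneg_left hπε hL

end Sensitivity

theorem ContractingWith.dist_iterate_fixedPoint_le {α : Type*} [MetricSpace α] [Nonempty α]
    [CompleteSpace α] {K : ℝ≥0} {f : α → α} (hf : ContractingWith K f) (x : α) (n : ℕ) :
    dist (f^[n] x) (fixedPoint f hf) ≤ K ^ n * dist x (fixedPoint f hf) := by
  have := (hf.toLipschitzWith.iterate n).dist_le_mul x (fixedPoint f hf)
  rwa [((hf.fixedPoint_isFixedPt).iterate n).eq, NNReal.coe_pow] at this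

theorem heterogeneous_population_convergence_general
    {Z : Type*} [MetricSpace Z]
    [MeasurableSpace Z] {d : ℕ}
    (β γ ε : ℝ) (hβ : 0 < β) (hγ : 0 < γ) (hε : 0 < ε) (hcontr : ε * β / γ < 1)
    (α : ℝ≥0) (hα : α ≤ 1)
    -- the learner's risk minimizer, assumed `(β/γ)`-Lipschitz in coupling form
    (A : Measure Z → EuclideanSpace ℝ (Fin d))
    (hA : ∀ μ ν : Measure Z, IsProbabilityMeasure μ → IsProbabilityMeasure ν →
      ∀ π : Measure (Z × Z), IsCoupling π μ ν →
        ‖A μ - A ν‖ ≤ β / γ * ∫ p, dist p.1 p.2 ∂π)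
    -- the distribution map of the selfish agents, assumed `ε`-sensitive in coupling form
    (D : EuclideanSpace ℝ (Fin d) → Measure Z)
    (hDprob : ∀ θ, IsProbabilityMeasure (D θ))
    (hDsens : ∀ θ θ', ∃ π : Measure (Z × Z), IsCoupling π (D θ) (D θ') ∧
      ∫ p, dist p.1 p.2 ∂π ≤ ε * ‖θ - θ'‖)
    -- the fixed distribution induced by the collective strategy
    (Dh : Measure Z) (hDh : IsProbabilityMeasure Dh)
    -- the retraining map on the heterogeneous population
    (T : EuclideanSpace ℝ (Fin d) → EuclideanSpace ℝ (Fin d))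
    (hT : ∀ θ, T θ = A (α • Dh + (1 - α) • D θ)) :
    ∃ ρ : ℝ, ρ = (1 - (α : ℝ)) * (ε * β / γ) ∧ ρ < 1 ∧
      (∀ θ θ', ‖T θ - T θ'‖ ≤ ρ * ‖θ - θ'‖) ∧
      ∃ θstar, T θstar = θstar ∧ (∀ θ', T θ' = θ' → θ' = θstar) ∧
        ∀ (θ₀ : EuclideanSpace ℝ (Fin d)) (t : ℕ),
          ‖T^[t] θ₀ - θstar‖ ≤ ρ ^ t * ‖θ₀ - θstar‖ := by
  set ρ : ℝ := (1 - (α : ℝ)) * (ε * β / γ)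
  have hα₁ : ((1 - α : ℝ≥0) : ℝ) = 1 - α := by rw [NNReal.coe_sub hα, NNReal.coe_one]
  have hρ₀ : 0 ≤ ρ := mul_nonneg (hα₁ ▸ (1 - α).coe_nonneg) (by positivity)
  have hρ₁ : ρ < 1 := (mul_le_of_le_one_left (by positivity) (by simp)).trans_lt hcontr
  have hA' : CouplingLipschitzWith (β / γ) A := by
    simpa only [CouplingLipschitzWith, dist_eq_norm] using hA
  have hD' : IsSensitive ε D := by simpa only [IsSensitive, dist_eq_norm] using hDsens
  have hLip (θ θ' : EuclideanSpace ℝ (Fin d)) : dist (T θ) (T θ') ≤ ρ * dist θ θ' := by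
    have := hA'.dist_comp_le (by positivity) (hD'.const_smul_add_smul α (1 - α) Dh)
      (fun _ => isProbabilityMeasure_smul_add_smul (add_tsub_cancel_of_le hα)) θ θ'
    rwa [← hT, ← hT, hα₁, show β / γ * ((1 - α) * ε) = ρ by ring] at this
  have hTcontr : ContractingWith ρ.toNNReal T :=
    ⟨by simpa [← NNReal.coe_lt_coe, hρ₀] using hρ₁, LipschitzWith.of_dist_le' hLip⟩
  refine ⟨ρ, rfl, hρ₁, by simpa only [dist_eq_norm] using hLip, hTcontr.fixedPoint T,
    hTcontr.fixedPoint_isFixedPt, fun _ h => hTcontr.fixedPoint_unique h, fun θ₀ t => ?_⟩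
  simpa only [dist_eq_norm, Real.coe_toNNReal _ hρ₀] using
    hTcontr.dist_iterate_fixedPoint_le θ₀ t

/-- **Proposition 5.3 (convergence of retraining with heterogeneous populations).** An
`α`-fraction of the population implements a fixed collective strategy inducing `Dh`, while a
`(1−α)`-fraction acts selfishly via the `ε`-sensitive distribution map `D`. Retraining
`T(θ) = A(α Dh + (1−α) D(θ))` is a `((1−α)εβ/γ)`-contraction and converges to its unique
fixed point `θ*_α` at rate `((1−α)εβ/γ)^t`. -/
theorem heterogeneous_population_convergence
    {Z : Type*} [MetricSpace Z] [CompleteSpace Z] [TopologicalSpace.SeparableSpace Z]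
    [MeasurableSpace Z] [BorelSpace Z] {d : ℕ}
    (β γ ε : ℝ) (hβ : 0 < β) (hγ : 0 < γ) (hε : 0 < ε) (hcontr : ε * β / γ < 1)
    (α : ℝ≥0) (hα : α ≤ 1)
    -- the learner's risk minimizer, assumed `(β/γ)`-Lipschitz in coupling form
    (A : Measure Z → EuclideanSpace ℝ (Fin d))
    (hA : ∀ μ ν : Measure Z, IsProbabilityMeasure μ → IsProbabilityMeasure ν →
      ∀ π : Measure (Z × Z), IsCoupling π μ ν →
        ‖A μ - A ν‖ ≤ β / γ * ∫ p, dist p.1 p.2 ∂π)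
    -- the distribution map of the selfish agents, assumed `ε`-sensitive in coupling form
    (D : EuclideanSpace ℝ (Fin d) → Measure Z)
    (hDprob : ∀ θ, IsProbabilityMeasure (D θ))
    (hDsens : ∀ θ θ', ∃ π : Measure (Z × Z), IsCoupling π (D θ) (D θ') ∧
      ∫ p, dist p.1 p.2 ∂π ≤ ε * ‖θ - θ'‖)
    -- the fixed distribution induced by the collective strategy
    (Dh : Measure Z) (hDh : IsProbabilityMeasure Dh)
    -- the retraining map on the heterogeneous population
    (T : EuclideanSpace ℝ (Fin d) → EuclideanSpace ℝ (Fin d))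
    (hT : ∀ θ, T θ = A (α • Dh + (1 - α) • D θ)) :
    ∃ ρ : ℝ, ρ = (1 - (α : ℝ)) * (ε * β / γ) ∧ ρ < 1 ∧
      (∀ θ θ', ‖T θ - T θ'‖ ≤ ρ * ‖θ - θ'‖) ∧
      ∃ θstar, T θstar = θstar ∧ (∀ θ', T θ' = θ' → θ' = θstar) ∧
        ∀ (θ₀ : EuclideanSpace ℝ (Fin d)) (t : ℕ),
          ‖T^[t] θ₀ - θstar‖ ≤ ρ ^ t * ‖θ₀ - θstar‖ :=
  heterogeneous_population_convergence_general β γ ε hβ hγ hε hcontr α hα A hA D hDprob hDsens Dh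
    hDh T hT
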